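/- arXiv:2303.00493 — 9 statements merged into one kernel-verified Lean document; each statement's English description precedes it below -/
import Mathlib

section
/- Let (Xₙ) be an increasing sequence of closed nowhere dense subsets of [0,1], and define h : [0,1] → ℝ by h(x) = 0 if x lies in no Xₙ, and h(x) = 1/2^{n+1} where n is the least index with x ∈ Xₙ otherwise. Then h equals its own oscillation function: for every x ∈ [0,1], osc_h(x) = h(x). -/
open Topology Set

/-- For an increasing sequence of closed nowhere dense subsets `Xₙ` of `[0,1]`, the function
`h` with `h x = 0` if `x` lies in no `Xₙ` and `h x = 1/2^(n+1)` for `n` the least index with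
`x ∈ Xₙ`, is its own oscillation function. -/
theorem h_is_own_oscillation (X : ℕ → Set ↥(Set.Icc (0:ℝ) 1)) (hmono : Monotone X)
    (hclosed : ∀ n, IsClosed (X n)) (hnd : ∀ n, IsNowhereDense (X n))
    (h : ↥(Set.Icc (0:ℝ) 1) → ℝ)
    (h0 : ∀ x, (∀ n, x ∉ X n) → h x = 0)
    (h1 : ∀ x n, x ∈ X n → (∀ m, m < n → x ∉ X m) → h x = 1 / 2 ^ (n + 1)) :
    ∀ x, oscillation h x = ENNReal.ofReal (h x) := by
  classical
  have hval : ∀ y : ↥(Set.Icc (0:ℝ) 1),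
      h y = 0 ∨ ∃ k, h y = 1 / 2 ^ (k + 1) ∧ y ∈ X k ∧ ∀ m, m < k → y ∉ X m := by
    intro y
    by_cases hy : ∃ n, y ∈ X n
    · exact Or.inr ⟨Nat.find hy, h1 y _ (Nat.find_spec hy) (fun m hm => Nat.find_min hy hm),
        Nat.find_spec hy, fun m hm => Nat.find_min hy hm⟩
    · exact Or.inl (h0 y (fun n hn => hy ⟨n, hn⟩))
  have hnonneg : ∀ y, 0 ≤ h y := by
    intro y
    rcases hval y with h' | ⟨k, h', _, _⟩ <;> rw [h'] <;> positivity
  -- the set of points in no `X n` is dense (Baire)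
  have hdense : Dense (⋂ n, (X n)ᶜ) := by
    refine dense_iInter_of_isOpen (fun n => (hclosed n).isOpen_compl) (fun n => ?_)
    rw [← interior_eq_empty_iff_dense_compl]
    exact (hclosed n).isNowhereDense_iff.1 (hnd n)
  -- lower bound
  have lower : ∀ x, ENNReal.ofReal (h x) ≤ oscillation h x := by
    intro x
    refine le_iInf₂ fun S hS => ?_
    rw [Filter.mem_map] at hS
    obtain ⟨U, hUS, hUopen, hxU⟩ := mem_nhds_iff.1 hS
    obtain ⟨y, hyU, hyD⟩ := hdense.inter_open_nonempty U hUopen ⟨x, hxU⟩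
    have hy0 : h y = 0 := h0 y (by simpa [Set.mem_iInter] using hyD)
    calc ENNReal.ofReal (h x) = edist (h x) (h y) := by
          rw [edist_dist, Real.dist_eq, hy0, sub_zero, abs_of_nonneg (hnonneg x)]
      _ ≤ EMetric.diam S := EMetric.edist_le_diam_of_mem (hUS hxU) (hUS hyU)
  -- upper bound
  have upper : ∀ (x : ↥(Set.Icc (0:ℝ) 1)) (N : ℕ), (∀ m, m < N → x ∉ X m) →
      oscillation h x ≤ ENNReal.ofReal (1 / 2 ^ (N + 1)) := by
    intro x N hxN
    set U : Set ↥(Set.Icc (0:ℝ) 1) := ⋂ m ∈ Finset.range N, (X m)ᶜ with hU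
    have hUopen : IsOpen U := isOpen_biInter_finset (fun m _ => (hclosed m).isOpen_compl)
    have hxU : x ∈ U := by
      simp only [hU, Set.mem_iInter, Finset.mem_range, Set.mem_compl_iff]
      exact fun m hm => hxN m hm
    have himg : h '' U ⊆ Set.Icc 0 (1 / 2 ^ (N + 1)) := by
      rintro _ ⟨y, hyU, rfl⟩
      refine ⟨hnonneg y, ?_⟩
      rcases hval y with h' | ⟨k, h', hyk, _⟩
      · rw [h']; positivity
      · have hNk : N ≤ k := by
          by_contra hlt
          push_neg at hlt
          have : y ∉ X k := by
            simp only [hU, Set.mem_iInter, Finset.mem_range, Set.mem_compl_iff] at hyU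
            exact hyU k hlt
          exact this hyk
        rw [h']
        have h2 : (2:ℝ) ^ (N + 1) ≤ 2 ^ (k + 1) :=
          pow_le_pow_right₀ one_le_two (by omega)
        exact one_div_le_one_div_of_le (by positivity) h2
    calc oscillation h x ≤ EMetric.diam (h '' U) :=
          biInf_le EMetric.diam (Filter.image_mem_map (hUopen.mem_nhds hxU))
      _ ≤ EMetric.diam (Set.Icc 0 (1 / 2 ^ (N + 1))) := EMetric.diam_mono himg
      _ = ENNReal.ofReal (1 / 2 ^ (N + 1) - 0) := Real.ediam_Icc _ _
      _ = ENNReal.ofReal (1 / 2 ^ (N + 1)) := by rw [sub_zero]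
  intro x
  refine le_antisymm ?_ (lower x)
  by_cases hx : ∃ n, x ∈ X n
  · have heq : h x = 1 / 2 ^ (Nat.find hx + 1) :=
      h1 x _ (Nat.find_spec hx) (fun m hm => Nat.find_min hx hm)
    rw [heq]
    exact upper x (Nat.find hx) (fun m hm => Nat.find_min hx hm)
  · push_neg at hx
    rw [h0 x hx, ENNReal.ofReal_zero]
    refine ENNReal.le_of_forall_pos_le_add fun ε hε _ => ?_
    obtain ⟨N, hN⟩ := exists_pow_lt_of_lt_one (show (0:ℝ) < ε from hε) (by norm_num : (1:ℝ)/2 < 1)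
    have hle : (1:ℝ) / 2 ^ (N + 1) ≤ (1/2) ^ N := by
      rw [← one_div_pow]
      exact pow_le_pow_of_le_one (by norm_num) (by norm_num) (by omega)
    calc oscillation h x ≤ ENNReal.ofReal (1 / 2 ^ (N + 1)) := upper x N (fun m _ => hx m)
      _ ≤ ENNReal.ofReal ((1/2 : ℝ) ^ N) := ENNReal.ofReal_le_ofReal hle
      _ ≤ ENNReal.ofReal (ε:ℝ) := ENNReal.ofReal_le_ofReal hN.le
      _ = 0 + ε := by rw [zero_add, ENNReal.ofReal_coe_nnreal]
end

section
/- Let (Xₙ) be an increasing sequence of closed subsets of [0,1], and define h : [0,1] → ℝ by h(x) = 0 if x lies in no Xₙ, and h(x) = 1/2^{n+1} where n is the least index with x ∈ Xₙ otherwise. Then h is upper semicontinuous on [0,1]. -/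
open Topology Set

/-- For an increasing sequence of closed subsets `Xₙ` of `[0,1]`, the function `h` with
`h x = 0` if `x` lies in no `Xₙ` and `h x = 1/2^(n+1)` for `n` the least index with `x ∈ Xₙ`,
is upper semicontinuous on `[0,1]`. -/
theorem h_upperSemicontinuous (X : ℕ → Set ↥(Set.Icc (0:ℝ) 1)) (hmono : Monotone X)
    (hclosed : ∀ n, IsClosed (X n))
    (h : ↥(Set.Icc (0:ℝ) 1) → ℝ)
    (h0 : ∀ x, (∀ n, x ∉ X n) → h x = 0)
    (h1 : ∀ x n, x ∈ X n → (∀ m, m < n → x ∉ X m) → h x = 1 / 2 ^ (n + 1)) :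
    UpperSemicontinuous h := by
  -- value of h via least index
  have hval : ∀ x, (∀ n, x ∉ X n) ∨ ∃ n, x ∈ X n ∧ ∀ m, m < n → x ∉ X m := by
    intro x
    classical
    by_cases hx : ∃ n, x ∈ X n
    · right
      exact ⟨Nat.find hx, Nat.find_spec hx, fun m hm => Nat.find_min hx hm⟩
    · left; push_neg at hx; exact hx
  -- bound: if x ∉ X n then h x ≤ 1/2^(n+2)
  have hbound : ∀ n x, x ∉ X n → h x ≤ 1 / 2 ^ (n + 2) := by
    intro n x hxn
    rcases hval x with hx | ⟨k, hk, hkmin⟩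
    · rw [h0 x hx]; positivity
    · rw [h1 x k hk hkmin]
      have hkn : n < k := by
        by_contra hle
        push_neg at hle
        exact hxn (hmono hle hk)
      have : (2:ℝ) ^ (n + 2) ≤ 2 ^ (k + 1) := by
        apply pow_le_pow_right₀ (by norm_num)
        omega
      exact one_div_le_one_div_of_le (by positivity) this
  intro x₀ y hy
  rcases hval x₀ with hx | ⟨n, hn, hnmin⟩
  · -- h x₀ = 0
    rw [h0 x₀ hx] at hy
    obtain ⟨n, hny⟩ : ∃ n, (1:ℝ) / 2 ^ (n + 2) < y := by
      obtain ⟨n, hn⟩ := exists_pow_lt_of_lt_one hy (by norm_num : (1:ℝ)/2 < 1)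
      refine ⟨n, lt_of_le_of_lt ?_ hn⟩
      rw [div_pow, one_pow]
      apply one_div_le_one_div_of_le (by positivity)
      apply pow_le_pow_right₀ (by norm_num); omega
    have hmem : (X n)ᶜ ∈ 𝓝 x₀ := (hclosed n).isOpen_compl.mem_nhds (hx n)
    filter_upwards [hmem] with x hxmem
    exact lt_of_le_of_lt (hbound n x hxmem) hny
  · rw [h1 x₀ n hn hnmin] at hy
    cases n with
    | zero =>
      -- h ≤ 1/2 everywhere
      filter_upwards with x
      refine lt_of_le_of_lt ?_ hy
      rcases hval x with hx | ⟨k, hk, hkmin⟩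
      · rw [h0 x hx]; positivity
      · rw [h1 x k hk hkmin]
        apply one_div_le_one_div_of_le (by norm_num)
        apply pow_le_pow_right₀ (by norm_num); omega
    | succ k =>
      have hmem : (X k)ᶜ ∈ 𝓝 x₀ :=
        (hclosed k).isOpen_compl.mem_nhds (hnmin k (Nat.lt_succ_self k))
      filter_upwards [hmem] with x hxmem
      exact lt_of_le_of_lt (hbound k x hxmem) hy
end

section
/- Let (Xₙ) be an increasing sequence of closed nowhere dense subsets of [0,1], and define h : [0,1] → ℝ by h(x) = 0 if x lies in no Xₙ, and h(x) = 1/2^{n+1} where n is the least index with x ∈ Xₙ otherwise. Then h is cliquish at every point of [0,1]: for every x₀, every ε > 0, and every open neighborhood U of x₀, there is a nonempty open set G ⊆ U ∩ [0,1] with |h(y) − h(z)| < ε for all y, z ∈ G. -/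
open Topology Set

/-- For an increasing sequence of closed nowhere dense subsets `Xₙ` of `[0,1]`, the function
`h` with `h x = 0` if `x` lies in no `Xₙ` and `h x = 1/2^(n+1)` for `n` least with `x ∈ Xₙ`,
is cliquish at every point of `[0,1]`. -/
theorem h_cliquish (X : ℕ → Set ↥(Set.Icc (0:ℝ) 1)) (hmono : Monotone X)
    (hclosed : ∀ n, IsClosed (X n)) (hnd : ∀ n, IsNowhereDense (X n))
    (h : ↥(Set.Icc (0:ℝ) 1) → ℝ)
    (h0 : ∀ x, (∀ n, x ∉ X n) → h x = 0)
    (h1 : ∀ x n, x ∈ X n → (∀ m, m < n → x ∉ X m) → h x = 1 / 2 ^ (n + 1)) :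
    ∀ (x₀ : ↥(Set.Icc (0:ℝ) 1)) (ε : ℝ), 0 < ε → ∀ U ∈ 𝓝 x₀,
      ∃ G : Set ↥(Set.Icc (0:ℝ) 1), IsOpen G ∧ G.Nonempty ∧ G ⊆ U ∧
        ∀ y ∈ G, ∀ z ∈ G, |h y - h z| < ε := by
  classical
  intro x₀ ε hε U hU
  -- choose N with 1/2^(N+1) < ε
  obtain ⟨N, hN⟩ : ∃ N : ℕ, (1:ℝ) / 2 ^ (N + 1) < ε := by
    obtain ⟨N, hN⟩ := exists_pow_lt_of_lt_one hε (by norm_num : (1:ℝ)/2 < 1)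
    refine ⟨N, lt_of_le_of_lt ?_ hN⟩
    rw [div_pow, one_pow]
    apply div_le_div_of_nonneg_left (by norm_num) (by positivity)
    exact pow_le_pow_right₀ (by norm_num) (Nat.le_succ N)
  obtain ⟨V, hVU, hVopen, hx₀V⟩ := mem_nhds_iff.mp hU
  refine ⟨V \ X N, hVopen.sdiff (hclosed N), ?_, fun y hy => hVU hy.1, ?_⟩
  · -- nonempty
    by_contra hempty
    rw [Set.not_nonempty_iff_eq_empty, Set.diff_eq_empty] at hempty
    have : V ⊆ interior (closure (X N)) :=
      interior_maximal (hempty.trans subset_closure) hVopen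
    rw [hnd N] at this
    exact this hx₀V
  · -- oscillation bound
    have key : ∀ y ∈ V \ X N, 0 ≤ h y ∧ h y < ε := by
      intro y hy
      by_cases hex : ∃ n, y ∈ X n
      · have hfind := Nat.find_spec hex
        set n := Nat.find hex
        have hmin : ∀ m, m < n → y ∉ X m := fun m hm => Nat.find_min hex hm
        have heq := h1 y n hfind hmin
        have hnN : N < n := by
          by_contra hle
          exact hy.2 (hmono (not_lt.mp hle) hfind)
        constructor
        · rw [heq]; positivity
        · rw [heq]
          refine lt_of_le_of_lt ?_ hN
          apply div_le_div_of_nonneg_left (by norm_num) (by positivity)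
          exact pow_le_pow_right₀ (by norm_num) (by omega)
      · push_neg at hex
        rw [h0 y hex]
        exact ⟨le_refl 0, hε⟩
    intro y hy z hz
    obtain ⟨hy0, hy1⟩ := key y hy
    obtain ⟨hz0, hz1⟩ := key z hz
    rw [abs_sub_lt_iff]
    constructor <;> linarith
end

section
/- There do not exist two functions f, g : [0,1] → ℝ, each with a dense set of continuity points, such that the set of continuity points of f equals the set of discontinuity points of g and vice versa. -/
/-- Volterra's theorem: there do not exist two functions on `[0,1]`, each with a dense set of
continuity points, whose continuity points are exactly the other's discontinuity points. -/
theorem volterra :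
    ¬ ∃ f g : ↥(Set.Icc (0:ℝ) 1) → ℝ,
      Dense {x | ContinuousAt f x} ∧ Dense {x | ContinuousAt g x} ∧
      {x | ContinuousAt f x} = {x | ¬ ContinuousAt g x} ∧
      {x | ContinuousAt g x} = {x | ¬ ContinuousAt f x} := by
  rintro ⟨f, g, hdf, hdg, hfg, hgf⟩
  have h1 : IsGδ {x | ContinuousAt f x} := IsGδ.setOf_continuousAt f
  have h2 : IsGδ {x | ContinuousAt g x} := IsGδ.setOf_continuousAt g
  have hd : Dense ({x | ContinuousAt f x} ∩ {x | ContinuousAt g x}) :=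
    Dense.inter_of_Gδ h1 h2 hdf hdg
  have hempty : {x | ContinuousAt f x} ∩ {x | ContinuousAt g x} = ∅ := by
    ext x
    simp only [Set.mem_inter_iff, Set.mem_empty_iff_false, iff_false]
    rintro ⟨hx, hy⟩
    rw [hfg] at hx
    exact hx hy
  rw [hempty] at hd
  have : (⟨0, by norm_num⟩ : ↥(Set.Icc (0:ℝ) 1)) ∈ closure (∅ : Set _) := hd _
  simp at this
end

section
/- There is no function f : ℝ → ℝ that is continuous at every rational point and discontinuous at every irrational point. -/
/-- Volterra's corollary: there is no `f : ℝ → ℝ` continuous at every rational and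
discontinuous at every irrational. -/
theorem no_function_continuous_exactly_on_rationals :
    ¬ ∃ f : ℝ → ℝ, (∀ q : ℚ, ContinuousAt f (q : ℝ)) ∧
      (∀ x : ℝ, Irrational x → ¬ ContinuousAt f x) := by
  rintro ⟨f, hq, hi⟩
  have hGδ : IsGδ { x | ContinuousAt f x } := IsGδ.setOf_continuousAt f
  have hdense : Dense { x | ContinuousAt f x } :=
    Rat.denseRange_cast.mono (by rintro _ ⟨q, rfl⟩; exact hq q)
  have hD : Dense ({ x | ContinuousAt f x } ∩ { x : ℝ | Irrational x }) :=
    hdense.inter_of_Gδ hGδ .setOf_irrational dense_irrational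
  obtain ⟨x, hx1, hx2⟩ := hD.nonempty
  exact hi x hx2 hx1
end

section
/- For any countable dense set D ⊂ [0,1] and any function f : [0,1] → ℝ, either f is discontinuous at some point of D, or f is continuous at some point of [0,1] \ D. -/
lemma countable_isMeagre {X : Type*} [TopologicalSpace X] [T1Space X]
    [∀ x : X, Filter.NeBot (nhdsWithin x {x}ᶜ)] {s : Set X} (hs : s.Countable) :
    IsMeagre s := by
  rw [isMeagre_iff_countable_union_isNowhereDense]
  refine ⟨(fun x => {x}) '' s, ?_, hs.image _, ?_⟩
  · rintro t ⟨x, -, rfl⟩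
    show interior (closure {x}) = ∅
    rw [closure_singleton]; exact interior_singleton x
  · intro x hx
    exact ⟨{x}, ⟨x, hx, rfl⟩, rfl⟩

/-- Generalised Volterra corollary: for any countable dense `D ⊆ [0,1]` and any
`f : [0,1] → ℝ`, either `f` is discontinuous at a point of `D`, or `f` is continuous at a
point of `[0,1] \ D`. -/
theorem generalized_volterra (D : Set ↥(Set.Icc (0:ℝ) 1)) (hcount : D.Countable)
    (hdense : Dense D) (f : ↥(Set.Icc (0:ℝ) 1) → ℝ) :
    (∃ x ∈ D, ¬ ContinuousAt f x) ∨ (∃ x ∉ D, ContinuousAt f x) := by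
  by_contra h
  push_neg at h
  obtain ⟨h1, h2⟩ := h
  have hD : D = {x | ContinuousAt f x} := by
    ext x
    constructor
    · exact fun hx => h1 x hx
    · intro hx
      by_contra hxD
      exact h2 x hxD hx
  have hGδ : IsGδ D := hD ▸ IsGδ.setOf_continuousAt f
  have hres : D ∈ residual _ := residual_of_dense_Gδ hGδ hdense
  have hmeagre : IsMeagre D := countable_isMeagre hcount
  have : (D ∩ Dᶜ : Set ↥(Set.Icc (0:ℝ) 1)) ∈ residual _ :=
    Filter.inter_mem hres hmeagre
  rw [Set.inter_compl_self] at this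
  have hdense' : Dense (∅ : Set ↥(Set.Icc (0:ℝ) 1)) := dense_of_mem_residual this
  simpa using hdense'.nonempty
end

section
/- If a sequence (fₙ) of lower semicontinuous functions fₙ : [0,1] → ℝ is pointwise bounded above (for every x there is N with fₙ(x) ≤ N for all n), then it is uniformly bounded above on some nonempty open interval: there exist M ∈ ℕ and c < d in [0,1] with fₙ(x) ≤ M for all n and all x ∈ (c,d). -/
/-- Uniform boundedness principle for lower semicontinuous functions: a sequence of lower
semicontinuous functions on `[0,1]` that is pointwise bounded above is uniformly bounded
above on some nonempty open interval. -/
theorem uniform_boundedness_lsco (f : ℕ → ↥(Set.Icc (0:ℝ) 1) → ℝ)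
    (hl : ∀ n, LowerSemicontinuous (f n))
    (hpt : ∀ x, ∃ N : ℕ, ∀ n, f n x ≤ N) :
    ∃ (M : ℕ) (c d : ↥(Set.Icc (0:ℝ) 1)), c < d ∧
      ∀ n, ∀ x ∈ Set.Ioo c d, f n x ≤ M := by
  set F : ℕ → Set (Set.Icc (0:ℝ) 1) := fun N => ⋂ n, {x | f n x ≤ (N : ℝ)} with hF
  have hclosed : ∀ N, IsClosed (F N) := fun N =>
    isClosed_iInter fun n => (hl n).isClosed_preimage (N : ℝ)
  have hcover : ⋃ N, F N = Set.univ := by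
    ext x
    simp only [Set.mem_iUnion, Set.mem_univ, iff_true, hF, Set.mem_iInter, Set.mem_setOf_eq]
    exact hpt x
  obtain ⟨M, x, hx⟩ := nonempty_interior_of_iUnion_of_closed hclosed hcover
  rw [mem_interior_iff_mem_nhds, nhds_subtype_eq_comap, Filter.mem_comap] at hx
  obtain ⟨V, hV, hVsub⟩ := hx
  obtain ⟨a, b, hab, hsub⟩ := mem_nhds_iff_exists_Ioo_subset.1 hV
  have hx0 : (0:ℝ) ≤ x := x.2.1
  have hx1 : (x:ℝ) ≤ 1 := x.2.2
  have hcd : max a 0 < min b 1 := by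
    simp only [lt_min_iff, max_lt_iff]
    refine ⟨⟨?_, ?_⟩, ?_, ?_⟩ <;> linarith [hab.1, hab.2]
  refine ⟨M, ⟨max a 0, le_max_right a 0, hcd.le.trans (min_le_right b 1)⟩,
    ⟨min b 1, (le_max_right a 0).trans hcd.le, min_le_right b 1⟩,
    Subtype.mk_lt_mk.2 hcd, fun n y hy => ?_⟩
  have hy1 : max a 0 < (y : ℝ) := hy.1
  have hy2 : (y : ℝ) < min b 1 := hy.2
  have : y ∈ F M := hVsub (hsub ⟨(le_max_left a 0).trans_lt hy1,
    hy2.trans_le (min_le_left b 1)⟩)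
  exact Set.mem_iInter.1 this n
end

section
/- If f : [0,∞) → ℝ is continuous and lim_{n→∞} f(n·x) = 0 for every x ∈ (0,∞), then lim_{x→∞} f(x) = 0. -/
/-!
By the Baire category theorem applied to the relatively closed sets
`{x > 0 | |f (n * x)| ≤ ε for all n ≥ N}`, which cover `(0, ∞)`, one of them contains an
interval `(a, b)` with `0 < a < b`. The dilates `n • (a, b)` with `n ≥ N` overlap as soon as
`n (b - a) > a`, so they cover a whole half-line, on which therefore `|f| ≤ ε`.
-/

open Topology Filter Set Metric

theorem exists_isOpen_forall_ge_mem_closedBall_of_tendsto {X E : Type*} [TopologicalSpace X]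
    [BaireSpace X] [PseudoMetricSpace E] {V : Set X} (hV : IsOpen V) (hVne : V.Nonempty)
    {g : ℕ → X → E} {c : E} (hg : ∀ n, ContinuousOn (g n) V)
    (hlim : ∀ x ∈ V, Tendsto (fun n => g n x) atTop (𝓝 c)) {ε : ℝ} (hε : 0 < ε) :
    ∃ N, ∃ U, IsOpen U ∧ U.Nonempty ∧ U ⊆ V ∧ ∀ x ∈ U, ∀ n ≥ N, g n x ∈ closedBall c ε := by
  set F : ℕ → Set X := fun N => (⋃ n ≥ N, V ∩ g n ⁻¹' (closedBall c ε)ᶜ)ᶜ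
  have mem_F {N x} : x ∈ F N ↔ ∀ n ≥ N, x ∈ V → g n x ∈ closedBall c ε := by
    simp [F]
  have hF_closed (N : ℕ) : IsClosed (F N) :=
    (isOpen_biUnion fun n _ =>
      (hg n).isOpen_inter_preimage hV isClosed_closedBall.isOpen_compl).isClosed_compl
  have hF_cover : ⋃ N, F N = univ := by
    refine eq_univ_of_forall fun x => mem_iUnion.2 ?_
    by_cases hx : x ∈ V
    · obtain ⟨N, hN⟩ := ((hlim x hx).eventually (closedBall_mem_nhds c hε)).exists_forall_of_atTop
      exact ⟨N, mem_F.2 fun n hn _ => hN n hn⟩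
    · exact ⟨0, mem_F.2 fun _ _ hx' => absurd hx' hx⟩
  obtain ⟨x, hxV, hx⟩ :=
    (dense_iUnion_interior_of_closed hF_closed hF_cover).inter_open_nonempty V hV hVne
  obtain ⟨N, hxN⟩ := mem_iUnion.1 hx
  refine ⟨N, V ∩ interior (F N), hV.inter isOpen_interior, ⟨x, hxV, hxN⟩, inter_subset_left,
    fun y hy n hn => mem_F.1 (interior_subset hy.2) n hn hy.1⟩

theorem eventually_eq_natCast_mul_of_mem_Ioo {a b : ℝ} (ha : 0 < a) (hab : a < b) (N : ℕ) :
    ∀ᶠ y in atTop, ∃ n : ℕ, N ≤ n ∧ ∃ x ∈ Ioo a b, y = n * x := by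
  have hb : 0 < b := ha.trans hab
  filter_upwards [eventually_gt_atTop (N * b), eventually_gt_atTop (a * b / (b - a))]
    with y hyN hy
  have hy₀ : 0 < y := (by positivity : (0 : ℝ) ≤ N * b).trans_lt hyN
  set n := ⌊y / b⌋₊ + 1
  have hn_gt : y / b < n := by simpa [n] using Nat.lt_floor_add_one (y / b)
  have hn_le : (n : ℝ) ≤ y / b + 1 := by
    simpa [n] using Nat.floor_le (div_nonneg hy₀.le hb.le)
  have hn₀ : (0 : ℝ) < n := by positivity
  refine ⟨n, ?_, y / n, ⟨?_, ?_⟩, (mul_div_cancel₀ y hn₀.ne').symm⟩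
  · exact_mod_cast ((lt_div_iff₀ hb).2 hyN).trans hn_gt |>.le
  · rw [lt_div_iff₀ hn₀]
    rw [div_lt_iff₀ (sub_pos.2 hab)] at hy
    calc a * n ≤ a * (y / b + 1) := by gcongr
      _ = (a * y + a * b) / b := by field_simp
      _ < y := by rw [div_lt_iff₀ hb]; linarith
  · rw [div_lt_iff₀ hn₀]
    rwa [div_lt_iff₀ hb, mul_comm] at hn_gt

/-- Croft's lemma: if `f` is continuous on `[0,∞)` and `f(n·x) → 0` as `n → ∞` for every
`x > 0`, then `f(x) → 0` as `x → ∞`. -/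
theorem croft (f : ℝ → ℝ) (hf : ContinuousOn f (Set.Ici (0:ℝ)))
    (h : ∀ x : ℝ, 0 < x → Tendsto (fun n : ℕ => f (n * x)) atTop (𝓝 0)) :
    Tendsto f atTop (𝓝 0) := by
  refine nhds_basis_closedBall.tendsto_right_iff.2 fun ε hε => ?_
  have hcont (n : ℕ) : ContinuousOn (fun x => f (n * x)) (Ioi 0) :=
    hf.comp (by fun_prop) fun x hx => mem_Ici.2 (mul_nonneg n.cast_nonneg (le_of_lt hx))
  obtain ⟨N, U, hU, ⟨x, hxU⟩, hUpos, hsmall⟩ :=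
    exists_isOpen_forall_ge_mem_closedBall_of_tendsto isOpen_Ioi ⟨1, one_pos⟩ hcont h hε
  obtain ⟨b, hxb, hIco⟩ := exists_Ico_subset_of_mem_nhds (hU.mem_nhds hxU) ⟨x + 1, lt_add_one x⟩
  filter_upwards [eventually_eq_natCast_mul_of_mem_Ioo (hUpos hxU) hxb N]
    with y hy
  obtain ⟨n, hn, z, hz, rfl⟩ := hy
  exact hsmall z (hIco (Ioo_subset_Ico_self hz)) n hn
end

section
/- (Vitali–Lebesgue, one direction) If f : [0,1] → ℝ is Riemann integrable, then the set of points of [0,1] at which f is discontinuous has Lebesgue measure zero. -/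
/-- `I` is the Riemann integral of `f` over `[a,b]`: for every `ε > 0` there is `δ > 0` such
that every tagged partition of `[a,b]` with mesh less than `δ` has Riemann sum within `ε`
of `I`. -/
def IsRiemannIntegralOn (f : ℝ → ℝ) (a b I : ℝ) : Prop :=
  ∀ ε > (0:ℝ), ∃ δ > (0:ℝ), ∀ (n : ℕ) (x t : ℕ → ℝ),
    x 0 = a → x n = b →
    (∀ i < n, x i ≤ x (i + 1)) →
    (∀ i < n, x (i + 1) - x i < δ) →
    (∀ i < n, t i ∈ Set.Icc (x i) (x (i + 1))) →
    |(∑ i ∈ Finset.range n, f (t i) * (x (i + 1) - x i)) - I| < ε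

/-!
At a discontinuity, `f` jumps by at least some `c = 1/(k+1)` at points arbitrarily close by, so it
suffices to show that each `jumpSet f [0,1] c` is null. Take a partition so fine that any two
Riemann sums differ by less than `2ε`. A cell whose interior meets the jump set contains two points
where `f` differs by at least `c`; tagging these cells at such points (and every other cell twice
at the same point) shows that their total length is less than `2ε / c`. Up to the finitely many
nodes, they cover the jump set.
-/

open MeasureTheory Set Finset

def jumpSet (f : ℝ → ℝ) (s : Set ℝ) (c : ℝ) : Set ℝ :=
  {x ∈ s | ∀ δ > 0, ∃ y ∈ s, |y - x| < δ ∧ c ≤ |f y - f x|}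

def VariesByAtLeast (f : ℝ → ℝ) (K : Set ℝ) (c : ℝ) : Prop :=
  ∃ t ∈ K, ∃ u ∈ K, c ≤ f t - f u

structure IsFinePartition (x : ℕ → ℝ) (n : ℕ) (a b δ : ℝ) : Prop where
  zero_eq : x 0 = a
  last_eq : x n = b
  mono : ∀ i < n, x i ≤ x (i + 1)
  mesh_lt : ∀ i < n, x (i + 1) - x i < δ

open scoped Classical in
noncomputable def bigVariationCells (f : ℝ → ℝ) (c : ℝ) (x : ℕ → ℝ) (n : ℕ) : Finset ℕ :=
  (range n).filter fun i => VariesByAtLeast f (Icc (x i) (x (i + 1))) c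

lemma mem_bigVariationCells {f : ℝ → ℝ} {c : ℝ} {x : ℕ → ℝ} {n i : ℕ} :
    i ∈ bigVariationCells f c x n ↔ i < n ∧ VariesByAtLeast f (Icc (x i) (x (i + 1))) c := by
  classical
  simp [bigVariationCells]

lemma setOf_not_continuousWithinAt_subset_iUnion_jumpSet (f : ℝ → ℝ) (s : Set ℝ) :
    {x | x ∈ s ∧ ¬ ContinuousWithinAt f s x} ⊆ ⋃ k : ℕ, jumpSet f s (1 / (k + 1)) := by
  rintro x ⟨hx, hdisc⟩
  rw [Metric.continuousWithinAt_iff] at hdisc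
  push Not at hdisc
  obtain ⟨ε, hε, hfar⟩ := hdisc
  obtain ⟨k, hk⟩ := exists_nat_one_div_lt hε
  refine mem_iUnion.mpr ⟨k, hx, fun δ hδ => ?_⟩
  obtain ⟨y, hy, hyx, hfyx⟩ := hfar δ hδ
  rw [Real.dist_eq] at hyx hfyx
  exact ⟨y, hy, hyx, by linarith⟩

lemma variesByAtLeast_Icc_of_mem_jumpSet {f : ℝ → ℝ} {s : Set ℝ} {c p u v : ℝ}
    (hp : p ∈ jumpSet f s c) (hpuv : p ∈ Ioo u v) : VariesByAtLeast f (Icc u v) c := by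
  obtain ⟨y, -, hyp, hjump⟩ :=
    hp.2 (min (p - u) (v - p)) (lt_min (sub_pos.2 hpuv.1) (sub_pos.2 hpuv.2))
  have hy : y ∈ Icc u v := by
    obtain ⟨hlo, hhi⟩ := abs_lt.1 hyp
    constructor <;> linarith [min_le_left (p - u) (v - p), min_le_right (p - u) (v - p)]
  have hp' : p ∈ Icc u v := Ioo_subset_Icc_self hpuv
  rcases le_abs.1 hjump with hjump | hjump
  · exact ⟨y, hy, p, hp', hjump⟩
  · exact ⟨p, hp', y, hy, by rwa [neg_sub] at hjump⟩

lemma exists_eq_or_mem_Ioo_of_mem_Icc (x : ℕ → ℝ) {p : ℝ} :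
    ∀ {n : ℕ}, p ∈ Icc (x 0) (x n) → (∃ j ≤ n, x j = p) ∨ ∃ i < n, p ∈ Ioo (x i) (x (i + 1))
  | 0, hp => Or.inl ⟨0, le_rfl, le_antisymm hp.1 hp.2⟩
  | n + 1, hp => by
    rcases le_or_gt p (x n) with hpn | hpn
    · rcases exists_eq_or_mem_Ioo_of_mem_Icc x ⟨hp.1, hpn⟩ with ⟨j, hj, hjp⟩ | ⟨i, hi, hpi⟩
      · exact Or.inl ⟨j, hj.trans n.le_succ, hjp⟩
      · exact Or.inr ⟨i, hi.trans n.lt_succ_self, hpi⟩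
    · rcases hp.2.eq_or_lt with hpn' | hpn'
      · exact Or.inl ⟨n + 1, le_rfl, hpn'.symm⟩
      · exact Or.inr ⟨n, n.lt_succ_self, hpn, hpn'⟩

lemma jumpSet_subset_biUnion_bigVariationCells_union (f : ℝ → ℝ) (c : ℝ) (x : ℕ → ℝ) (n : ℕ) :
    jumpSet f (Icc (x 0) (x n)) c ⊆
      (⋃ i ∈ bigVariationCells f c x n, Ioo (x i) (x (i + 1))) ∪ x '' Set.Iic n := by
  intro p hp
  rcases exists_eq_or_mem_Ioo_of_mem_Icc x hp.1 with ⟨j, hj, hjp⟩ | ⟨i, hi, hpi⟩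
  · exact Or.inr ⟨j, hj, hjp⟩
  · refine Or.inl (mem_biUnion ?_ hpi)
    exact mem_bigVariationCells.2 ⟨hi, variesByAtLeast_Icc_of_mem_jumpSet hp hpi⟩

lemma volume_jumpSet_le (f : ℝ → ℝ) (c : ℝ) {x : ℕ → ℝ} {n : ℕ}
    (hmono : ∀ i < n, x i ≤ x (i + 1)) :
    volume (jumpSet f (Icc (x 0) (x n)) c) ≤
      ENNReal.ofReal (∑ i ∈ bigVariationCells f c x n, (x (i + 1) - x i)) := by
  have hnodes : volume (x '' Set.Iic n) = 0 := ((Set.finite_Iic n).image x).measure_zero _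
  have hlen : ∀ i ∈ bigVariationCells f c x n, 0 ≤ x (i + 1) - x i := fun i hi =>
    sub_nonneg.2 (hmono i (mem_bigVariationCells.1 hi).1)
  calc volume (jumpSet f (Icc (x 0) (x n)) c)
      ≤ volume ((⋃ i ∈ bigVariationCells f c x n, Ioo (x i) (x (i + 1))) ∪ x '' Set.Iic n) :=
        measure_mono (jumpSet_subset_biUnion_bigVariationCells_union f c x n)
    _ ≤ volume (⋃ i ∈ bigVariationCells f c x n, Ioo (x i) (x (i + 1))) :=
        (measure_union_le _ _).trans_eq (by rw [hnodes, add_zero])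
    _ ≤ ∑ i ∈ bigVariationCells f c x n, volume (Ioo (x i) (x (i + 1))) :=
        measure_biUnion_finset_le _ _
    _ = ENNReal.ofReal (∑ i ∈ bigVariationCells f c x n, (x (i + 1) - x i)) := by
        simp only [Real.volume_Ioo, ENNReal.ofReal_sum_of_nonneg hlen]

lemma exists_isFinePartition {a b δ : ℝ} (hab : a ≤ b) (hδ : 0 < δ) :
    ∃ n x, IsFinePartition x n a b δ := by
  obtain ⟨n, hn⟩ := exists_nat_gt ((b - a) / δ)
  have hn0 : (0 : ℝ) < n := (div_nonneg (sub_nonneg.2 hab) hδ.le).trans_lt hn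
  have hstep : (b - a) / n < δ := by
    rw [div_lt_iff₀ hn0, mul_comm]
    rwa [div_lt_iff₀ hδ] at hn
  refine ⟨n, fun i => a + i * ((b - a) / n), ⟨by simp, ?_, fun i _ => ?_, fun i _ => ?_⟩⟩
  · field_simp
    ring
  · push_cast
    have : 0 ≤ (b - a) / n := div_nonneg (sub_nonneg.2 hab) hn0.le
    linarith
  · push_cast
    linarith

lemma IsRiemannIntegralOn.exists_forall_sum_sub_lt {f : ℝ → ℝ} {a b I : ℝ}
    (hf : IsRiemannIntegralOn f a b I) {ε : ℝ} (hε : 0 < ε) :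
    ∃ δ > 0, ∀ (n : ℕ) (x t u : ℕ → ℝ), IsFinePartition x n a b δ →
      (∀ i < n, t i ∈ Icc (x i) (x (i + 1))) → (∀ i < n, u i ∈ Icc (x i) (x (i + 1))) →
      ∑ i ∈ range n, (f (t i) - f (u i)) * (x (i + 1) - x i) < 2 * ε := by
  obtain ⟨δ, hδ, hsum⟩ := hf ε hε
  refine ⟨δ, hδ, fun n x t u hx ht hu => ?_⟩
  have ht' := abs_lt.1 (hsum n x t hx.zero_eq hx.last_eq hx.mono hx.mesh_lt ht)
  have hu' := abs_lt.1 (hsum n x u hx.zero_eq hx.last_eq hx.mono hx.mesh_lt hu)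
  simp only [sub_mul, sum_sub_distrib]
  linarith [ht'.2, hu'.1]

lemma IsRiemannIntegralOn.exists_forall_mul_sum_bigVariationCells_lt {f : ℝ → ℝ} {a b I : ℝ}
    (hf : IsRiemannIntegralOn f a b I) {ε : ℝ} (hε : 0 < ε) :
    ∃ δ > 0, ∀ (n : ℕ) (x : ℕ → ℝ), IsFinePartition x n a b δ → ∀ c : ℝ,
      c * ∑ i ∈ bigVariationCells f c x n, (x (i + 1) - x i) < 2 * ε := by
  obtain ⟨δ, hδ, hsum⟩ := hf.exists_forall_sum_sub_lt hε
  refine ⟨δ, hδ, fun n x hx c => ?_⟩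
  set B := bigVariationCells f c x n
  have htags : ∀ i, ∃ t u : ℝ, (i < n → t ∈ Icc (x i) (x (i + 1)) ∧ u ∈ Icc (x i) (x (i + 1))) ∧
      (i ∈ B → c ≤ f t - f u) ∧ (i ∉ B → t = u) := by
    intro i
    by_cases hi : i ∈ B
    · obtain ⟨t, ht, u, hu, htu⟩ := (mem_bigVariationCells.1 hi).2
      exact ⟨t, u, fun _ => ⟨ht, hu⟩, fun _ => htu, fun h => absurd hi h⟩
    · have hxi : i < n → x i ∈ Icc (x i) (x (i + 1)) := fun h => ⟨le_rfl, hx.mono i h⟩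
      exact ⟨x i, x i, fun h => ⟨hxi h, hxi h⟩, fun h => absurd h hi, fun _ => rfl⟩
  choose t u htu_mem hjump hequal using htags
  calc c * ∑ i ∈ B, (x (i + 1) - x i)
      ≤ ∑ i ∈ B, (f (t i) - f (u i)) * (x (i + 1) - x i) := by
        rw [mul_sum]
        refine sum_le_sum fun i hi => mul_le_mul_of_nonneg_right (hjump i hi) ?_
        exact sub_nonneg.2 (hx.mono i (mem_bigVariationCells.1 hi).1)
    _ = ∑ i ∈ range n, (f (t i) - f (u i)) * (x (i + 1) - x i) :=
        sum_subset (fun i hi => mem_range.2 (mem_bigVariationCells.1 hi).1) fun i _ hi => by rw [hequal i hi, sub_self, zero_mul]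
    _ < 2 * ε := hsum n x t u hx (fun i hi => (htu_mem i hi).1) (fun i hi => (htu_mem i hi).2)

lemma IsRiemannIntegralOn.volume_jumpSet_eq_zero {f : ℝ → ℝ} {a b I c : ℝ}
    (hf : IsRiemannIntegralOn f a b I) (hab : a ≤ b) (hc : 0 < c) :
    volume (jumpSet f (Icc a b) c) = 0 := by
  refine le_antisymm (ENNReal.le_of_forall_pos_le_add fun η hη _ => ?_) zero_le
  obtain ⟨δ, hδ, hsum⟩ :=
    hf.exists_forall_mul_sum_bigVariationCells_lt (ε := c * η / 2) (by positivity)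
  obtain ⟨n, x, hx⟩ := exists_isFinePartition hab hδ
  have hlen : ∑ i ∈ bigVariationCells f c x n, (x (i + 1) - x i) ≤ η := by
    have := hsum n x hx c
    rw [mul_div_cancel₀ _ two_ne_zero] at this
    exact (lt_of_mul_lt_mul_left this hc.le).le
  calc volume (jumpSet f (Icc a b) c)
      ≤ ENNReal.ofReal (∑ i ∈ bigVariationCells f c x n, (x (i + 1) - x i)) := by
        simpa only [hx.zero_eq, hx.last_eq] using volume_jumpSet_le f c hx.mono
    _ ≤ 0 + η := by
        rw [zero_add, ← ENNReal.ofReal_coe_nnreal]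
        exact ENNReal.ofReal_le_ofReal hlen

/-- Vitali–Lebesgue (one direction): if `f` is Riemann integrable on `[0,1]`, then its set of
discontinuity points in `[0,1]` has Lebesgue measure zero. -/
theorem riemann_integrable_discontinuity_measure_zero (f : ℝ → ℝ) (I : ℝ)
    (hf : IsRiemannIntegralOn f 0 1 I) :
    MeasureTheory.volume
      {x : ℝ | x ∈ Set.Icc (0:ℝ) 1 ∧ ¬ ContinuousWithinAt f (Set.Icc (0:ℝ) 1) x} = 0 :=
  measure_mono_null (setOf_not_continuousWithinAt_subset_iUnion_jumpSet f _)
    (measure_iUnion_null fun _ => hf.volume_jumpSet_eq_zero zero_le_one (by positivity))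
end
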